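/- Under assumptions (A1) and (A2): (i) C is convex on ℝ. (ii) If ∇₊C(t) < α for some t ∈ ℝ and α ∈ ℝ, then limsup_{n→∞} (1/a_n) · log( e^{−a_n C(t)} · E[ e^{t W_n} · 1_{{W_n/a_n ≥ α}} ] ) < 0. (iii) If Σ_n e^{−ε a_n} < ∞ for every ε > 0, then limsup_{n→∞} W_n/a_n ≤ ∇₊C(0) ℙ-almost surely. (iv) If α < ∇₋C(t) for some t ∈ ℝ and α ∈ ℝ, then limsup_{n→∞} (1/a_n) · log( e^{−a_n C(t)} · E[ e^{t W_n} · 1_{{W_n/a_n ≤ α}} ] ) < 0. (v) If Σ_n e^{−ε a_n} < ∞ for every ε > 0, then ∇₋C(0) ≤ limsup_{n→∞} W_n/a_n ℙ-almost surely. -/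

import Mathlib

open MeasureTheory Metric Filter Set Asymptotics
open scoped ENNReal Topology

noncomputable section

/-- Points of `ℝ^d`. -/
abbrev Pt (d : ℕ) : Type := EuclideanSpace ℝ (Fin d)

variable {d k : ℕ}

/-- `(μ(B(x,r)))^q = ∏_j (μ_j(B(x,r)))^{q_j}`. -/
def ballWeight (μ : Fin k → Measure (Pt d)) (q : Fin k → ℝ) (x : Pt d) (r : ℝ) : ℝ≥0∞ :=
  ∏ j, μ j (closedBall x r) ^ q j

/-- A centered `ε`-covering of `E`: a countable family of closed balls with centers in `E`,
radii in `(0, ε]`, covering `E`. -/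
def IsCenteredCover (E : Set (Pt d)) (ε : ℝ) (S : Set (Pt d × ℝ)) : Prop :=
  S.Countable ∧ (∀ p ∈ S, p.1 ∈ E ∧ 0 < p.2 ∧ p.2 ≤ ε) ∧
    E ⊆ ⋃ p ∈ S, closedBall p.1 p.2

/-- A centered `ε`-packing of `E`: a countable family of pairwise disjoint closed balls
with centers in `E` and radii in `(0, ε]`. -/
def IsCenteredPacking (E : Set (Pt d)) (ε : ℝ) (S : Set (Pt d × ℝ)) : Prop :=
  S.Countable ∧ (∀ p ∈ S, p.1 ∈ E ∧ 0 < p.2 ∧ p.2 ≤ ε) ∧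
    S.Pairwise fun p p' => Disjoint (closedBall p.1 p.2) (closedBall p'.1 p'.2)

/-- `Σ_i (μ(B(x_i,r_i)))^q e^{t φ(r_i)}` over a family of balls. -/
def famSum (μ : Fin k → Measure (Pt d)) (φ : ℝ → ℝ) (q : Fin k → ℝ) (t : ℝ)
    (S : Set (Pt d × ℝ)) : ℝ≥0∞ :=
  ∑' p : S, ballWeight μ q p.1.1 p.1.2 * ENNReal.ofReal (Real.exp (t * φ p.1.2))

/-- `H̄^{q,t}_{μ,φ,ε}`. -/
def preH (μ : Fin k → Measure (Pt d)) (φ : ℝ → ℝ) (q : Fin k → ℝ) (t ε : ℝ)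
    (E : Set (Pt d)) : ℝ≥0∞ :=
  ⨅ (S : Set (Pt d × ℝ)) (_ : IsCenteredCover E ε S), famSum μ φ q t S

/-- `H̄^{q,t}_{μ,φ} = sup_{ε>0} H̄^{q,t}_{μ,φ,ε}`. -/
def mixedHbar (μ : Fin k → Measure (Pt d)) (φ : ℝ → ℝ) (q : Fin k → ℝ) (t : ℝ)
    (E : Set (Pt d)) : ℝ≥0∞ :=
  ⨆ (ε : ℝ) (_ : 0 < ε), preH μ φ q t ε E

/-- The mixed generalized Hausdorff measure `H^{q,t}_{μ,φ}`. -/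
def mixedH (μ : Fin k → Measure (Pt d)) (φ : ℝ → ℝ) (q : Fin k → ℝ) (t : ℝ)
    (E : Set (Pt d)) : ℝ≥0∞ :=
  ⨆ (F : Set (Pt d)) (_ : F ⊆ E), mixedHbar μ φ q t F

/-- `P̄^{q,t}_{μ,φ,ε}`. -/
def preP (μ : Fin k → Measure (Pt d)) (φ : ℝ → ℝ) (q : Fin k → ℝ) (t ε : ℝ)
    (E : Set (Pt d)) : ℝ≥0∞ :=
  ⨆ (S : Set (Pt d × ℝ)) (_ : IsCenteredPacking E ε S), famSum μ φ q t S

/-- `P̄^{q,t}_{μ,φ} = inf_{ε>0} P̄^{q,t}_{μ,φ,ε}`. -/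
def mixedPbar (μ : Fin k → Measure (Pt d)) (φ : ℝ → ℝ) (q : Fin k → ℝ) (t : ℝ)
    (E : Set (Pt d)) : ℝ≥0∞ :=
  ⨅ (ε : ℝ) (_ : 0 < ε), preP μ φ q t ε E

/-- The mixed generalized packing measure `P^{q,t}_{μ,φ}`. -/
def mixedP (μ : Fin k → Measure (Pt d)) (φ : ℝ → ℝ) (q : Fin k → ℝ) (t : ℝ)
    (E : Set (Pt d)) : ℝ≥0∞ :=
  ⨅ (A : ℕ → Set (Pt d)) (_ : E ⊆ ⋃ n, A n), ∑' n, mixedPbar μ φ q t (A n)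

/-- The mixed Hausdorff dimension `b_{μ,φ}(q,E)`: the jump point of `t ↦ H^{q,t}_{μ,φ}(E)`. -/
def bDim (μ : Fin k → Measure (Pt d)) (φ : ℝ → ℝ) (q : Fin k → ℝ) (E : Set (Pt d)) : EReal :=
  sInf (Real.toEReal '' {t : ℝ | mixedH μ φ q t E = 0})

/-- The mixed packing dimension `B_{μ,φ}(q,E)`. -/
def BDim (μ : Fin k → Measure (Pt d)) (φ : ℝ → ℝ) (q : Fin k → ℝ) (E : Set (Pt d)) : EReal :=
  sInf (Real.toEReal '' {t : ℝ | mixedP μ φ q t E = 0})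

/-- The mixed logarithmic index `Λ_{μ,φ}(q,E)`. -/
def LDim (μ : Fin k → Measure (Pt d)) (φ : ℝ → ℝ) (q : Fin k → ℝ) (E : Set (Pt d)) : EReal :=
  sInf (Real.toEReal '' {t : ℝ | mixedPbar μ φ q t E = 0})

/-- Topological support of a Borel measure. -/
def supp1 (ν : Measure (Pt d)) : Set (Pt d) := {x | ∀ r : ℝ, 0 < r → 0 < ν (ball x r)}

/-- `supp(μ) = ⋂_j supp(μ_j)`. -/
def mSupp (μ : Fin k → Measure (Pt d)) : Set (Pt d) := ⋂ j, supp1 (μ j)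

/-- `T^q_{μ,δ}(E)`. -/
def covT (μ : Fin k → Measure (Pt d)) (q : Fin k → ℝ) (δ : ℝ) (E : Set (Pt d)) : ℝ≥0∞ :=
  ⨅ (S : Set (Pt d)) (_ : S.Countable ∧ S ⊆ E ∧ E ⊆ ⋃ x ∈ S, closedBall x δ),
    ∑' x : S, ballWeight μ q x.1 δ

/-- `S^q_{μ,δ}(E)`. -/
def packS (μ : Fin k → Measure (Pt d)) (q : Fin k → ℝ) (δ : ℝ) (E : Set (Pt d)) : ℝ≥0∞ :=
  ⨆ (S : Set (Pt d)) (_ : S.Countable ∧ S ⊆ E ∧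
      S.Pairwise fun x y => Disjoint (closedBall x δ) (closedBall y δ)),
    ∑' x : S, ballWeight μ q x.1 δ

/-- `L̄^q_{μ,φ}(E) = limsup_{δ↓0} log T^q_{μ,δ}(E) / (−φ(δ))`. -/
def upperL (μ : Fin k → Measure (Pt d)) (φ : ℝ → ℝ) (q : Fin k → ℝ) (E : Set (Pt d)) : EReal :=
  limsup (fun δ : ℝ => (((-φ δ)⁻¹ : ℝ) : EReal) * ENNReal.log (covT μ q δ E)) (𝓝[>] 0)

/-- `L̲^q_{μ,φ}(E)`. -/
def lowerL (μ : Fin k → Measure (Pt d)) (φ : ℝ → ℝ) (q : Fin k → ℝ) (E : Set (Pt d)) : EReal :=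
  liminf (fun δ : ℝ => (((-φ δ)⁻¹ : ℝ) : EReal) * ENNReal.log (covT μ q δ E)) (𝓝[>] 0)

/-- `C̄^q_{μ,φ}(E)`. -/
def upperC (μ : Fin k → Measure (Pt d)) (φ : ℝ → ℝ) (q : Fin k → ℝ) (E : Set (Pt d)) : EReal :=
  limsup (fun δ : ℝ => (((-φ δ)⁻¹ : ℝ) : EReal) * ENNReal.log (packS μ q δ E)) (𝓝[>] 0)

/-- `C̲^q_{μ,φ}(E)`. -/
def lowerC (μ : Fin k → Measure (Pt d)) (φ : ℝ → ℝ) (q : Fin k → ℝ) (E : Set (Pt d)) : EReal :=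
  liminf (fun δ : ℝ => (((-φ δ)⁻¹ : ℝ) : EReal) * ENNReal.log (packS μ q δ E)) (𝓝[>] 0)

/-- `I^q_{μ,δ} = ∫_{S_μ} ∏_j (μ_j(B(t_j,δ)))^{q_j} dμ_1(t_1)⋯dμ_k(t_k)`. -/
def intI (μ : Fin k → Measure (Pt d)) (q : Fin k → ℝ) (δ : ℝ) : ℝ≥0∞ :=
  ∫⁻ x in Set.univ.pi (fun j => supp1 (μ j)), ∏ j, μ j (closedBall (x j) δ) ^ q j
    ∂(Measure.pi μ)

/-- `Ī^q_{μ,φ}`. -/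
def upperI (μ : Fin k → Measure (Pt d)) (φ : ℝ → ℝ) (q : Fin k → ℝ) : EReal :=
  limsup (fun δ : ℝ => (((-φ δ)⁻¹ : ℝ) : EReal) * ENNReal.log (intI μ q δ)) (𝓝[>] 0)

/-- `I̲^q_{μ,φ}`. -/
def lowerI (μ : Fin k → Measure (Pt d)) (φ : ℝ → ℝ) (q : Fin k → ℝ) : EReal :=
  liminf (fun δ : ℝ => (((-φ δ)⁻¹ : ℝ) : EReal) * ENNReal.log (intI μ q δ)) (𝓝[>] 0)

/-- `log(ν(B(x,r)))/φ(r)`. -/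
def locRatio (ν : Measure (Pt d)) (φ : ℝ → ℝ) (x : Pt d) (r : ℝ) : ℝ :=
  Real.log ((ν (closedBall x r)).toReal) / φ r

/-- `X̄^α(φ)`. -/
def XUpper (μ : Fin k → Measure (Pt d)) (φ : ℝ → ℝ) (α : Fin k → ℝ) : Set (Pt d) :=
  {x | x ∈ mSupp μ ∧ ∀ j,
    limsup (fun r : ℝ => ((locRatio (μ j) φ x r : ℝ) : EReal)) (𝓝[>] 0) ≤ (α j : EReal)}

/-- `X̲_α(φ)`. -/
def XLower (μ : Fin k → Measure (Pt d)) (φ : ℝ → ℝ) (α : Fin k → ℝ) : Set (Pt d) :=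
  {x | x ∈ mSupp μ ∧ ∀ j,
    (α j : EReal) ≤ liminf (fun r : ℝ => ((locRatio (μ j) φ x r : ℝ) : EReal)) (𝓝[>] 0)}

/-- The `s`-dimensional centered Hausdorff measure (the case `q = 0`, `φ = log`). -/
def cHaus (μ : Fin k → Measure (Pt d)) (s : ℝ) (E : Set (Pt d)) : ℝ≥0∞ :=
  mixedH μ Real.log (fun _ => 0) s E

/-- The `s`-dimensional packing measure (the case `q = 0`, `φ = log`). -/
def cPack (μ : Fin k → Measure (Pt d)) (s : ℝ) (E : Set (Pt d)) : ℝ≥0∞ :=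
  mixedP μ Real.log (fun _ => 0) s E

/-- Hausdorff dimension (jump point of `s ↦ cHaus s E`). -/
def hDim (μ : Fin k → Measure (Pt d)) (E : Set (Pt d)) : EReal :=
  bDim μ Real.log (fun _ => 0) E

/-- Packing dimension (jump point of `s ↦ cPack s E`). -/
def pDim (μ : Fin k → Measure (Pt d)) (E : Set (Pt d)) : EReal :=
  BDim μ Real.log (fun _ => 0) E

section LDAux


/-- Right derivative of a convex function vs slopes. -/
lemma LD_right_slope {C : ℝ → ℝ} (hC : ConvexOn ℝ Set.univ C) {t α : ℝ}
    (h : derivWithin C (Set.Ioi t) t < α) : ∃ s, t < s ∧ C s - C t < α * (s - t) := by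
  have hmono : MonotoneOn (slope C t) (Set.Ioi t) := fun u hu v hv huv =>
    hC.slope_mono (mem_univ t) ⟨mem_univ u, ne_of_gt hu⟩ ⟨mem_univ v, ne_of_gt hv⟩ huv
  have hbdd : BddBelow (slope C t '' Set.Ioi t) := by
    refine ⟨slope C t (t - 1), ?_⟩
    rintro _ ⟨u, hu, rfl⟩
    exact hC.slope_mono (mem_univ t) ⟨mem_univ _, by norm_num⟩
      ⟨mem_univ u, ne_of_gt hu⟩ (by simp at hu ⊢; linarith)
  have htend := hmono.tendsto_nhdsGT hbdd
  have hd : HasDerivWithinAt C (sInf (slope C t '' Set.Ioi t)) (Set.Ioi t) t := by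
    rw [hasDerivWithinAt_iff_tendsto_slope' (notMem_Ioi.2 le_rfl)]
    exact htend
  rw [hd.derivWithin (uniqueDiffWithinAt_Ioi t)] at h
  obtain ⟨x, hx, hlt⟩ := exists_lt_of_csInf_lt ((nonempty_Ioi (a := t)).image _) h
  obtain ⟨u, hu, rfl⟩ := hx
  refine ⟨u, hu, ?_⟩
  rw [slope_def_field] at hlt
  have hut : (0:ℝ) < u - t := by simp at hu; linarith
  have := (div_lt_iff₀ hut).1 hlt
  linarith

/-- Left derivative of a convex function vs slopes. -/
lemma LD_left_slope {C : ℝ → ℝ} (hC : ConvexOn ℝ Set.univ C) {t α : ℝ}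
    (h : α < derivWithin C (Set.Iio t) t) : ∃ s, s < t ∧ α * (t - s) < C t - C s := by
  have hmono : MonotoneOn (slope C t) (Set.Iio t) := fun u hu v hv huv =>
    hC.slope_mono (mem_univ t) ⟨mem_univ u, ne_of_lt hu⟩ ⟨mem_univ v, ne_of_lt hv⟩ huv
  have hbdd : BddAbove (slope C t '' Set.Iio t) := by
    refine ⟨slope C t (t + 1), ?_⟩
    rintro _ ⟨u, hu, rfl⟩
    exact hC.slope_mono (mem_univ t) ⟨mem_univ u, ne_of_lt hu⟩
      ⟨mem_univ _, by norm_num⟩ (by simp at hu ⊢; linarith)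
  have htend := hmono.tendsto_nhdsLT hbdd
  have hd : HasDerivWithinAt C (sSup (slope C t '' Set.Iio t)) (Set.Iio t) t := by
    rw [hasDerivWithinAt_iff_tendsto_slope' (notMem_Iio.2 le_rfl)]
    exact htend
  rw [hd.derivWithin (uniqueDiffWithinAt_Iio t)] at h
  obtain ⟨x, hx, hlt⟩ := exists_lt_of_lt_csSup ((nonempty_Iio (a := t)).image _) h
  obtain ⟨u, hu, rfl⟩ := hx
  refine ⟨u, hu, ?_⟩
  rw [slope_def_field] at hlt
  have hut : (0:ℝ) < t - u := by simp at hu; linarith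
  have h2 : (C u - C t) / (u - t) = (C t - C u) / (t - u) := by
    rw [← neg_div_neg_eq]; ring_nf
  rw [h2] at hlt
  exact (lt_div_iff₀ hut).1 hlt




variable {Ω : Type*} [MeasurableSpace Ω]

lemma LD_int_pos (P : Measure Ω) [IsProbabilityMeasure P] {f : Ω → ℝ}
    (hf : Integrable (fun ω => Real.exp (f ω)) P) :
    0 < ∫ ω, Real.exp (f ω) ∂P := by
  rw [integral_pos_iff_support_of_nonneg (fun ω => (Real.exp_pos _).le) hf]
  have : Function.support (fun ω => Real.exp (f ω)) = Set.univ := by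
    ext ω; simp [Function.mem_support, Real.exp_ne_zero]
  rw [this]
  simp

lemma LD_holder (P : Measure Ω) [IsProbabilityMeasure P] {Wf : Ω → ℝ} (hW : Measurable Wf)
    (hA1 : ∀ t : ℝ, Integrable (fun ω => Real.exp (t * Wf ω)) P)
    {x y a b : ℝ} (ha : 0 < a) (hb : 0 < b) (hab : a + b = 1) :
    ∫ ω, Real.exp ((a * x + b * y) * Wf ω) ∂P ≤
      (∫ ω, Real.exp (x * Wf ω) ∂P) ^ a * (∫ ω, Real.exp (y * Wf ω) ∂P) ^ b := by
  have hpq : (1/a).HolderConjugate (1/b) := Real.holderConjugate_one_div ha hb hab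
  have hmem : ∀ (c t : ℝ), 0 < c → MemLp (fun ω => Real.exp (c * t * Wf ω)) (ENNReal.ofReal (1/c)) P := by
    intro c t hc
    have hne0 : ENNReal.ofReal (1/c) ≠ 0 := by
      simp [ENNReal.ofReal_eq_zero, not_le, hc]
    have hnetop : ENNReal.ofReal (1/c) ≠ ∞ := ENNReal.ofReal_ne_top
    have haes : AEStronglyMeasurable (fun ω => Real.exp (c * t * Wf ω)) P :=
      (Real.measurable_exp.comp (measurable_const.mul hW)).aestronglyMeasurable
    rw [← memLp_norm_rpow_iff (q := ENNReal.ofReal (1/c)) haes hne0 hnetop]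
    have hdiv : ENNReal.ofReal (1/c) / ENNReal.ofReal (1/c) = 1 := ENNReal.div_self hne0 hnetop
    rw [hdiv, memLp_one_iff_integrable]
    have : (fun ω => ‖Real.exp (c * t * Wf ω)‖ ^ (ENNReal.ofReal (1/c)).toReal)
        = fun ω => Real.exp (t * Wf ω) := by
      ext ω
      rw [ENNReal.toReal_ofReal (by positivity), Real.norm_eq_abs,
        abs_of_pos (Real.exp_pos _), ← Real.exp_mul]
      congr 1
      field_simp
    rw [this]
    exact hA1 t
  have key := integral_mul_norm_le_Lp_mul_Lq (μ := P) hpq (hmem a x ha) (hmem b y hb)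
  have h1 : (fun ω => ‖Real.exp (a * x * Wf ω)‖ * ‖Real.exp (b * y * Wf ω)‖)
      = fun ω => Real.exp ((a * x + b * y) * Wf ω) := by
    ext ω
    rw [Real.norm_eq_abs, Real.norm_eq_abs, abs_of_pos (Real.exp_pos _),
      abs_of_pos (Real.exp_pos _), ← Real.exp_add]
    ring_nf
  have h2 : ∀ (c t : ℝ), 0 < c →
      (∫ ω, ‖Real.exp (c * t * Wf ω)‖ ^ (1/c) ∂P) ^ (1/(1/c)) = (∫ ω, Real.exp (t * Wf ω) ∂P) ^ c := by
    intro c t hc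
    have : (fun ω => ‖Real.exp (c * t * Wf ω)‖ ^ (1/c)) = fun ω => Real.exp (t * Wf ω) := by
      ext ω
      rw [Real.norm_eq_abs, abs_of_pos (Real.exp_pos _), ← Real.exp_mul]
      congr 1
      field_simp
    rw [this, one_div_one_div]
  rw [h1] at key
  rw [h2 a x ha, h2 b y hb] at key
  exact key

lemma LD_limsup_neg {a : ℕ → ℝ} (hapos : ∀ n, 0 < a n) {X : ℕ → ℝ≥0∞} {b : ℕ → ℝ} {L : ℝ}
    (hL : L < 0) (hb : Tendsto b atTop (𝓝 L))
    (hX : ∀ n, X n ≤ ENNReal.ofReal (Real.exp (a n * b n))) :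
    limsup (fun n => (((a n)⁻¹ : ℝ) : EReal) * ENNReal.log (X n)) atTop < (0 : EReal) := by
  have key : ∀ n, (((a n)⁻¹ : ℝ) : EReal) * ENNReal.log (X n) ≤ ((b n : ℝ) : EReal) := by
    intro n
    have h1 : ENNReal.log (X n) ≤ ((a n * b n : ℝ) : EReal) := by
      calc ENNReal.log (X n) ≤ ENNReal.log (ENNReal.ofReal (Real.exp (a n * b n))) :=
            ENNReal.log_monotone (hX n)
        _ = ((a n * b n : ℝ) : EReal) := by
            rw [ENNReal.log_ofReal_of_pos (Real.exp_pos _), Real.log_exp]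
    calc (((a n)⁻¹ : ℝ) : EReal) * ENNReal.log (X n)
        ≤ (((a n)⁻¹ : ℝ) : EReal) * ((a n * b n : ℝ) : EReal) :=
          mul_le_mul_of_nonneg_left h1 (by exact_mod_cast inv_nonneg.2 (hapos n).le)
      _ = ((b n : ℝ) : EReal) := by
          rw [← EReal.coe_mul]
          congr 1
          rw [← mul_assoc, inv_mul_cancel₀ (hapos n).ne', one_mul]
  have hlim : Tendsto (fun n => ((b n : ℝ) : EReal)) atTop (𝓝 ((L : ℝ) : EReal)) :=
    EReal.tendsto_coe.2 hb
  calc limsup (fun n => (((a n)⁻¹ : ℝ) : EReal) * ENNReal.log (X n)) atTop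
      ≤ limsup (fun n => ((b n : ℝ) : EReal)) atTop :=
        limsup_le_limsup (Eventually.of_forall key)
    _ = ((L : ℝ) : EReal) := hlim.limsup_eq
    _ < 0 := by exact_mod_cast hL




variable {Ω : Type*} [MeasurableSpace Ω]

lemma LD_chernoff (P : Measure Ω) {Wn : Ω → ℝ} (hWn : Measurable Wn)
    {s : ℝ} (hint : Integrable (fun ω => Real.exp (s * Wn ω)) P)
    (S : Set Ω) (t c : ℝ)
    (hS : ∀ ω ∈ S, Real.exp (t * Wn ω) ≤ Real.exp c * Real.exp (s * Wn ω)) :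
    ∫⁻ ω in S, ENNReal.ofReal (Real.exp (t * Wn ω)) ∂P ≤
      ENNReal.ofReal (Real.exp c * ∫ ω, Real.exp (s * Wn ω) ∂P) := by
  have hmeas : Measurable (fun ω => ENNReal.ofReal (Real.exp c * Real.exp (s * Wn ω))) :=
    (measurable_const.mul (Real.measurable_exp.comp (measurable_const.mul hWn))).ennreal_ofReal
  calc ∫⁻ ω in S, ENNReal.ofReal (Real.exp (t * Wn ω)) ∂P
      ≤ ∫⁻ ω in S, ENNReal.ofReal (Real.exp c * Real.exp (s * Wn ω)) ∂P :=
        setLIntegral_mono hmeas (fun ω hω => ENNReal.ofReal_le_ofReal (hS ω hω))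
    _ ≤ ∫⁻ ω, ENNReal.ofReal (Real.exp c * Real.exp (s * Wn ω)) ∂P :=
        setLIntegral_le_lintegral _ _
    _ = ENNReal.ofReal (∫ ω, Real.exp c * Real.exp (s * Wn ω) ∂P) :=
        (ofReal_integral_eq_lintegral_ofReal (hint.const_mul _)
          (Eventually.of_forall fun ω => by positivity)).symm
    _ = ENNReal.ofReal (Real.exp c * ∫ ω, Real.exp (s * Wn ω) ∂P) := by
        rw [integral_const_mul]

lemma LD_markov (P : Measure Ω) {Wn : Ω → ℝ} (hWn : Measurable Wn)
    {s : ℝ} (hint : Integrable (fun ω => Real.exp (s * Wn ω)) P)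
    (S : Set Ω) (c : ℝ)
    (hS : ∀ ω ∈ S, Real.exp c ≤ Real.exp (s * Wn ω)) :
    P S ≤ ENNReal.ofReal (Real.exp (-c) * ∫ ω, Real.exp (s * Wn ω) ∂P) := by
  have hmeas : Measurable (fun ω => ENNReal.ofReal (Real.exp (s * Wn ω))) :=
    (Real.measurable_exp.comp (measurable_const.mul hWn)).ennreal_ofReal
  have h1 : ENNReal.ofReal (Real.exp c) * P S ≤ ENNReal.ofReal (∫ ω, Real.exp (s * Wn ω) ∂P) := by
    calc ENNReal.ofReal (Real.exp c) * P S = ∫⁻ _ in S, ENNReal.ofReal (Real.exp c) ∂P :=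
          (setLIntegral_const S _).symm
      _ ≤ ∫⁻ ω in S, ENNReal.ofReal (Real.exp (s * Wn ω)) ∂P :=
          setLIntegral_mono hmeas (fun ω hω => ENNReal.ofReal_le_ofReal (hS ω hω))
      _ ≤ ∫⁻ ω, ENNReal.ofReal (Real.exp (s * Wn ω)) ∂P := setLIntegral_le_lintegral _ _
      _ = ENNReal.ofReal (∫ ω, Real.exp (s * Wn ω) ∂P) :=
          (ofReal_integral_eq_lintegral_ofReal hint
            (Eventually.of_forall fun ω => (Real.exp_pos _).le)).symm
  calc P S = ENNReal.ofReal (Real.exp (-c)) * (ENNReal.ofReal (Real.exp c) * P S) := by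
        rw [← mul_assoc, ← ENNReal.ofReal_mul (Real.exp_nonneg _), ← Real.exp_add,
          neg_add_cancel, Real.exp_zero, ENNReal.ofReal_one, one_mul]
    _ ≤ ENNReal.ofReal (Real.exp (-c)) * ENNReal.ofReal (∫ ω, Real.exp (s * Wn ω) ∂P) :=
        mul_le_mul_right h1 _
    _ = ENNReal.ofReal (Real.exp (-c) * ∫ ω, Real.exp (s * Wn ω) ∂P) :=
        (ENNReal.ofReal_mul (Real.exp_nonneg _)).symm

lemma LD_bc (P : Measure Ω) [IsProbabilityMeasure P] {S : ℕ → Set Ω} {g : ℕ → ℝ}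
    (hsum : Summable g) (hbound : ∀ᶠ n in atTop, P (S n) ≤ ENNReal.ofReal (g n)) :
    ∀ᵐ ω ∂P, ∀ᶠ n in atTop, ω ∉ S n := by
  obtain ⟨N, hN⟩ := eventually_atTop.1 hbound
  have hg : Summable (fun n => |g (n + N)|) := ((summable_nat_add_iff N).2 hsum).abs
  have h1 : (∑' n, P (S (n + N))) ≠ ∞ := by
    have hle : (∑' n, P (S (n + N))) ≤ ∑' n, ENNReal.ofReal |g (n + N)| := by
      refine ENNReal.tsum_le_tsum fun n => ?_
      exact le_trans (hN _ le_add_self) (ENNReal.ofReal_le_ofReal (le_abs_self _))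
    have heq : (∑' n, ENNReal.ofReal |g (n + N)|) = ENNReal.ofReal (∑' n, |g (n + N)|) :=
      (ENNReal.ofReal_tsum_of_nonneg (fun n => abs_nonneg _) hg).symm
    exact ne_top_of_le_ne_top (by rw [heq]; exact ENNReal.ofReal_ne_top) hle
  have h2 := ae_eventually_notMem h1
  filter_upwards [h2] with ω hω
  obtain ⟨M, hM⟩ := eventually_atTop.1 hω
  rw [eventually_atTop]
  refine ⟨M + N, fun m hm => ?_⟩
  have h3 := hM (m - N) (by omega)
  rwa [show m - N + N = m by omega] at h3


end LDAux

/-- the (real-valued) large deviation theorem. `∇₊C` and `∇₋C` are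
formalized as `derivWithin C (Set.Ioi t) t` and `derivWithin C (Set.Iio t) t`. -/
theorem stmt_19 {Ω : Type*} [MeasurableSpace Ω] (P : Measure Ω) [IsProbabilityMeasure P]
    (W : ℕ → Ω → ℝ) (hW : ∀ n, Measurable (W n))
    (a : ℕ → ℝ) (hapos : ∀ n, 0 < a n) (hatop : Tendsto a atTop atTop)
    (hA1 : ∀ (n : ℕ) (t : ℝ), Integrable (fun ω => Real.exp (t * W n ω)) P)
    (C : ℝ → ℝ)
    (hA2 : ∀ t : ℝ, Tendsto
      (fun n => (1 / a n) * Real.log (∫ ω, Real.exp (t * W n ω) ∂P))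
      atTop (𝓝 (C t))) :
    -- (i) `C` is convex
    ConvexOn ℝ Set.univ C ∧
    -- (ii)
    (∀ t α : ℝ, derivWithin C (Set.Ioi t) t < α →
      limsup (fun n => (((a n)⁻¹ : ℝ) : EReal) *
        ENNReal.log (ENNReal.ofReal (Real.exp (-(a n) * C t)) *
          ∫⁻ ω in {ω | α ≤ W n ω / a n}, ENNReal.ofReal (Real.exp (t * W n ω)) ∂P))
        atTop < (0 : EReal)) ∧
    -- (iii)
    ((∀ ε : ℝ, 0 < ε → Summable fun n => Real.exp (-ε * a n)) →
      ∀ᵐ ω ∂P, limsup (fun n => ((W n ω / a n : ℝ) : EReal)) atTop ≤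
        ((derivWithin C (Set.Ioi 0) 0 : ℝ) : EReal)) ∧
    -- (iv)
    (∀ t α : ℝ, α < derivWithin C (Set.Iio t) t →
      limsup (fun n => (((a n)⁻¹ : ℝ) : EReal) *
        ENNReal.log (ENNReal.ofReal (Real.exp (-(a n) * C t)) *
          ∫⁻ ω in {ω | W n ω / a n ≤ α}, ENNReal.ofReal (Real.exp (t * W n ω)) ∂P))
        atTop < (0 : EReal)) ∧
    -- (v)
    ((∀ ε : ℝ, 0 < ε → Summable fun n => Real.exp (-ε * a n)) →
      ∀ᵐ ω ∂P, ((derivWithin C (Set.Iio 0) 0 : ℝ) : EReal) ≤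
        limsup (fun n => ((W n ω / a n : ℝ) : EReal)) atTop) := by
  have hane : ∀ n, a n ≠ 0 := fun n => (hapos n).ne'
  set Cn : ℕ → ℝ → ℝ := fun n s => (1 / a n) * Real.log (∫ ω, Real.exp (s * W n ω) ∂P)
    with hCn
  have hIpos : ∀ n s, 0 < ∫ ω, Real.exp (s * W n ω) ∂P := fun n s => LD_int_pos P (hA1 n s)
  have hCnlim : ∀ s, Tendsto (fun n => Cn n s) atTop (𝓝 (C s)) := by
    intro s; simpa only [hCn] using hA2 s
  have hexp : ∀ n s, ∫ ω, Real.exp (s * W n ω) ∂P = Real.exp (a n * Cn n s) := by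
    intro n s
    have h1 : a n * Cn n s = Real.log (∫ ω, Real.exp (s * W n ω) ∂P) := by
      simp only [hCn]
      field_simp
      exact mul_div_cancel_left₀ _ (hane n)
    rw [h1, Real.exp_log (hIpos n s)]
  -- (i) convexity
  have hCconv : ConvexOn ℝ Set.univ C := by
    refine ⟨convex_univ, fun x _ y _ p q hp hq hpq => ?_⟩
    rcases hp.eq_or_lt with rfl | hp0
    · have hq1 : q = 1 := by linarith
      subst hq1; simp
    rcases hq.eq_or_lt with rfl | hq0
    · have hp1 : p = 1 := by linarith
      subst hp1; simp
    simp only [smul_eq_mul]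
    have hn : ∀ n, Cn n (p * x + q * y) ≤ p * Cn n x + q * Cn n y := by
      intro n
      have hH := LD_holder P (hW n) (hA1 n) (x := x) (y := y) hp0 hq0 hpq
      have hgt1 : (0:ℝ) < (∫ ω, Real.exp (x * W n ω) ∂P) ^ p :=
        Real.rpow_pos_of_pos (hIpos n x) p
      have hgt2 : (0:ℝ) < (∫ ω, Real.exp (y * W n ω) ∂P) ^ q :=
        Real.rpow_pos_of_pos (hIpos n y) q
      have hlog := Real.log_le_log (hIpos n (p * x + q * y)) hH
      rw [Real.log_mul hgt1.ne' hgt2.ne', Real.log_rpow (hIpos n x),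
        Real.log_rpow (hIpos n y)] at hlog
      simp only [hCn]
      have h4 := mul_le_mul_of_nonneg_left hlog
        (by have := hapos n; positivity : (0:ℝ) ≤ 1 / a n)
      refine h4.trans (le_of_eq ?_)
      ring
    exact le_of_tendsto_of_tendsto' (hCnlim (p * x + q * y))
      (((hCnlim x).const_mul p).add ((hCnlim y).const_mul q)) hn
  have hC0 : C 0 = 0 := by
    have h00 : Tendsto (fun _ : ℕ => (0:ℝ)) atTop (𝓝 (C 0)) := by
      have h := hA2 0
      simpa using h
    exact tendsto_nhds_unique h00 tendsto_const_nhds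
  refine ⟨hCconv, ?_, ?_, ?_, ?_⟩
  -- (ii)
  · intro t α h
    obtain ⟨s, hts, hslope⟩ := LD_right_slope hCconv h
    refine LD_limsup_neg hapos (L := -C t + (t - s) * α + C s)
      (b := fun n => -C t + (t - s) * α + Cn n s) ?_ ?_ ?_
    · nlinarith [hslope]
    · exact (hCnlim s).const_add _
    · intro n
      have hpt : ∀ ω ∈ {ω | α ≤ W n ω / a n},
          Real.exp (t * W n ω) ≤ Real.exp ((t - s) * (α * a n)) * Real.exp (s * W n ω) := by
        intro ω hω
        have hw : α * a n ≤ W n ω := (le_div_iff₀ (hapos n)).1 hω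
        have h2 : (t - s) * W n ω ≤ (t - s) * (α * a n) :=
          mul_le_mul_of_nonpos_left hw (by linarith)
        calc Real.exp (t * W n ω) = Real.exp ((t - s) * W n ω) * Real.exp (s * W n ω) := by
              rw [← Real.exp_add]; ring_nf
          _ ≤ Real.exp ((t - s) * (α * a n)) * Real.exp (s * W n ω) :=
              mul_le_mul_of_nonneg_right (Real.exp_le_exp.2 h2) (Real.exp_pos _).le
      have hch := LD_chernoff P (hW n) (hA1 n s) _ t _ hpt
      calc ENNReal.ofReal (Real.exp (-(a n) * C t)) *
            ∫⁻ ω in {ω | α ≤ W n ω / a n}, ENNReal.ofReal (Real.exp (t * W n ω)) ∂P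
          ≤ ENNReal.ofReal (Real.exp (-(a n) * C t)) *
            ENNReal.ofReal (Real.exp ((t - s) * (α * a n)) * ∫ ω, Real.exp (s * W n ω) ∂P) :=
            mul_le_mul_right hch _
        _ = ENNReal.ofReal (Real.exp (a n * (-C t + (t - s) * α + Cn n s))) := by
            rw [hexp n s, ← ENNReal.ofReal_mul (Real.exp_nonneg _), ← Real.exp_add,
              ← Real.exp_add]
            congr 1
            ring
  -- (iii)
  · intro hsum
    have key : ∀ α : ℝ, derivWithin C (Set.Ioi 0) 0 < α →
        ∀ᵐ ω ∂P, ∀ᶠ n in atTop, W n ω / a n < α := by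
      intro α hα
      obtain ⟨s, hs0, hslope⟩ := LD_right_slope hCconv hα
      have hcs : C s < α * s := by
        rw [hC0] at hslope
        simpa using hslope
      have hε : 0 < (α * s - C s) / 2 := by linarith
      have hPb : ∀ n, P {ω | α ≤ W n ω / a n} ≤
          ENNReal.ofReal (Real.exp (a n * (Cn n s - s * α))) := by
        intro n
        have hS : ∀ ω ∈ {ω | α ≤ W n ω / a n},
            Real.exp (s * (α * a n)) ≤ Real.exp (s * W n ω) := by
          intro ω hω
          have hw : α * a n ≤ W n ω := (le_div_iff₀ (hapos n)).1 hω
          exact Real.exp_le_exp.2 (mul_le_mul_of_nonneg_left hw hs0.le)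
        have hm := LD_markov P (hW n) (hA1 n s) _ _ hS
        refine le_trans hm (le_of_eq ?_)
        rw [hexp n s, ← Real.exp_add]
        congr 1
        ring
      have htt : Tendsto (fun n => Cn n s - s * α) atTop (𝓝 (C s - s * α)) :=
        (hCnlim s).sub_const _
      have hlt : C s - s * α < -((α * s - C s) / 2) := by nlinarith [hcs]
      have hev : ∀ᶠ n in atTop, P {ω | α ≤ W n ω / a n} ≤
          ENNReal.ofReal (Real.exp (-((α * s - C s) / 2) * a n)) := by
        filter_upwards [htt.eventually_le_const hlt] with n hn
        refine le_trans (hPb n) (ENNReal.ofReal_le_ofReal (Real.exp_le_exp.2 ?_))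
        calc a n * (Cn n s - s * α) ≤ a n * (-((α * s - C s) / 2)) :=
              mul_le_mul_of_nonneg_left hn (hapos n).le
          _ = -((α * s - C s) / 2) * a n := by ring
      have hbc := LD_bc P (hsum _ hε) hev
      filter_upwards [hbc] with ω hω
      filter_upwards [hω] with n hn
      exact not_le.1 hn
    have hcnt : ∀ᵐ ω ∂P, ∀ k : ℕ, ∀ᶠ n in atTop,
        W n ω / a n < derivWithin C (Set.Ioi 0) 0 + 1 / ((k:ℝ) + 1) :=
      ae_all_iff.2 fun k => key _ (lt_add_of_pos_right _ (by positivity))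
    filter_upwards [hcnt] with ω hω
    set D := derivWithin C (Set.Ioi 0) 0 with hD
    have hls : ∀ k : ℕ, limsup (fun n => ((W n ω / a n : ℝ) : EReal)) atTop ≤
        ((D + 1 / ((k:ℝ) + 1) : ℝ) : EReal) := by
      intro k
      exact limsup_le_of_le (by isBoundedDefault)
        ((hω k).mono fun n hn => by exact_mod_cast hn.le)
    by_contra hcon
    push_neg at hcon
    obtain ⟨r, hr1, hr2⟩ := EReal.exists_between_coe_real hcon
    have hr1' : D < r := by exact_mod_cast hr1
    obtain ⟨k, hk⟩ := exists_nat_one_div_lt (sub_pos.2 hr1')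
    have h5 : ((D + 1 / ((k:ℝ) + 1) : ℝ) : EReal) < (r : EReal) := by
      exact_mod_cast (by linarith : D + 1 / ((k:ℝ) + 1) < r)
    exact lt_irrefl _ (((hls k).trans_lt h5).trans hr2)
  -- (iv)
  · intro t α h
    obtain ⟨s, hst, hslope⟩ := LD_left_slope hCconv h
    refine LD_limsup_neg hapos (L := -C t + (t - s) * α + C s)
      (b := fun n => -C t + (t - s) * α + Cn n s) ?_ ?_ ?_
    · nlinarith [hslope]
    · exact (hCnlim s).const_add _
    · intro n
      have hpt : ∀ ω ∈ {ω | W n ω / a n ≤ α},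
          Real.exp (t * W n ω) ≤ Real.exp ((t - s) * (α * a n)) * Real.exp (s * W n ω) := by
        intro ω hω
        have hw : W n ω ≤ α * a n := (div_le_iff₀ (hapos n)).1 hω
        have h2 : (t - s) * W n ω ≤ (t - s) * (α * a n) :=
          mul_le_mul_of_nonneg_left hw (by linarith)
        calc Real.exp (t * W n ω) = Real.exp ((t - s) * W n ω) * Real.exp (s * W n ω) := by
              rw [← Real.exp_add]; ring_nf
          _ ≤ Real.exp ((t - s) * (α * a n)) * Real.exp (s * W n ω) :=
              mul_le_mul_of_nonneg_right (Real.exp_le_exp.2 h2) (Real.exp_pos _).le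
      have hch := LD_chernoff P (hW n) (hA1 n s) _ t _ hpt
      calc ENNReal.ofReal (Real.exp (-(a n) * C t)) *
            ∫⁻ ω in {ω | W n ω / a n ≤ α}, ENNReal.ofReal (Real.exp (t * W n ω)) ∂P
          ≤ ENNReal.ofReal (Real.exp (-(a n) * C t)) *
            ENNReal.ofReal (Real.exp ((t - s) * (α * a n)) * ∫ ω, Real.exp (s * W n ω) ∂P) :=
            mul_le_mul_right hch _
        _ = ENNReal.ofReal (Real.exp (a n * (-C t + (t - s) * α + Cn n s))) := by
            rw [hexp n s, ← ENNReal.ofReal_mul (Real.exp_nonneg _), ← Real.exp_add,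
              ← Real.exp_add]
            congr 1
            ring
  -- (v)
  · intro hsum
    have key : ∀ α : ℝ, α < derivWithin C (Set.Iio 0) 0 →
        ∀ᵐ ω ∂P, ∀ᶠ n in atTop, α < W n ω / a n := by
      intro α hα
      obtain ⟨s, hs0, hslope⟩ := LD_left_slope hCconv hα
      have hcs : C s < α * s := by
        have h' : α * (0 - s) = -(α * s) := by ring
        rw [hC0, h'] at hslope
        linarith
      have hε : 0 < (α * s - C s) / 2 := by linarith
      have hPb : ∀ n, P {ω | W n ω / a n ≤ α} ≤
          ENNReal.ofReal (Real.exp (a n * (Cn n s - s * α))) := by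
        intro n
        have hS : ∀ ω ∈ {ω | W n ω / a n ≤ α},
            Real.exp (s * (α * a n)) ≤ Real.exp (s * W n ω) := by
          intro ω hω
          have hw : W n ω ≤ α * a n := (div_le_iff₀ (hapos n)).1 hω
          exact Real.exp_le_exp.2 (mul_le_mul_of_nonpos_left hw hs0.le)
        have hm := LD_markov P (hW n) (hA1 n s) _ _ hS
        refine le_trans hm (le_of_eq ?_)
        rw [hexp n s, ← Real.exp_add]
        congr 1
        ring
      have htt : Tendsto (fun n => Cn n s - s * α) atTop (𝓝 (C s - s * α)) :=
        (hCnlim s).sub_const _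
      have hlt : C s - s * α < -((α * s - C s) / 2) := by nlinarith [hcs]
      have hev : ∀ᶠ n in atTop, P {ω | W n ω / a n ≤ α} ≤
          ENNReal.ofReal (Real.exp (-((α * s - C s) / 2) * a n)) := by
        filter_upwards [htt.eventually_le_const hlt] with n hn
        refine le_trans (hPb n) (ENNReal.ofReal_le_ofReal (Real.exp_le_exp.2 ?_))
        calc a n * (Cn n s - s * α) ≤ a n * (-((α * s - C s) / 2)) :=
              mul_le_mul_of_nonneg_left hn (hapos n).le
          _ = -((α * s - C s) / 2) * a n := by ring
      have hbc := LD_bc P (hsum _ hε) hev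
      filter_upwards [hbc] with ω hω
      filter_upwards [hω] with n hn
      exact not_le.1 hn
    have hcnt : ∀ᵐ ω ∂P, ∀ k : ℕ, ∀ᶠ n in atTop,
        derivWithin C (Set.Iio 0) 0 - 1 / ((k:ℝ) + 1) < W n ω / a n := by
      refine ae_all_iff.2 fun k => key _ ?_
      have : 0 < 1 / ((k:ℝ) + 1) := by positivity
      linarith
    filter_upwards [hcnt] with ω hω
    set D := derivWithin C (Set.Iio 0) 0 with hD
    have hls : ∀ k : ℕ, ((D - 1 / ((k:ℝ) + 1) : ℝ) : EReal) ≤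
        limsup (fun n => ((W n ω / a n : ℝ) : EReal)) atTop := by
      intro k
      exact le_limsup_of_frequently_le
        (((hω k).mono fun n hn => by exact_mod_cast hn.le).frequently)
        (by isBoundedDefault)
    by_contra hcon
    push_neg at hcon
    obtain ⟨r, hr1, hr2⟩ := EReal.exists_between_coe_real hcon
    have hr2' : r < D := by exact_mod_cast hr2
    obtain ⟨k, hk⟩ := exists_nat_one_div_lt (sub_pos.2 hr2')
    have h5 : (r : EReal) < ((D - 1 / ((k:ℝ) + 1) : ℝ) : EReal) := by
      exact_mod_cast (by linarith : r < D - 1 / ((k:ℝ) + 1))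
    exact lt_irrefl _ ((h5.trans_le (hls k)).trans hr1)


end
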